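/- arXiv:2208.12378 — 3 statements merged into one kernel-verified Lean document; each statement's English description precedes it below -/
import Mathlib

section
/- If ρ3(φ) = ρ3(ψ) in GL(2, ℤ[t,t⁻¹]) for the reduced Burau representation of B_3, and the images φ*, ψ* of φ, ψ in PSL(2,ℤ) (via evaluation at t = -1 and projection) are equal, then φ·ψ⁻¹ = Δ^{2k} for some integer k; moreover since det ρ3(φ) = det ρ3(ψ) forces equal exponent sums, k = 0 and φ = ψ. -/
open Matrix LaurentPolynomial

noncomputable def BurauM1 : Matrix (Fin 2) (Fin 2) (LaurentPolynomial ℤ) :=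
  !![-T 1, 1; 0, 1]

noncomputable def BurauM2 : Matrix (Fin 2) (Fin 2) (LaurentPolynomial ℤ) :=
  !![1, 0; T 1, -T 1]

/-- The braid group `B₃`, presented as `⟨σ₁, σ₂ | σ₁σ₂σ₁ = σ₂σ₁σ₂⟩`. -/
abbrev B3 : Type :=
  PresentedGroup
    ({FreeGroup.of 0 * FreeGroup.of 1 * FreeGroup.of 0 *
        (FreeGroup.of 1 * FreeGroup.of 0 * FreeGroup.of 1)⁻¹} : Set (FreeGroup (Fin 2)))

def sigma1 : B3 := PresentedGroup.of 0
def sigma2 : B3 := PresentedGroup.of 1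


/-- The matrix `S = [[1,1],[0,1]]` as an element of `SL(2,ℤ)`. -/
def Smat : Matrix.SpecialLinearGroup (Fin 2) ℤ :=
  ⟨!![1, 1; 0, 1], by norm_num [Matrix.det_fin_two_of]⟩

/-- The matrix `T = [[1,0],[-1,1]]` as an element of `SL(2,ℤ)`. -/
def Tmat : Matrix.SpecialLinearGroup (Fin 2) ℤ :=
  ⟨!![1, 0; -1, 1], by norm_num [Matrix.det_fin_two_of]⟩

namespace BurauAux

def xx : B3 := sigma1 * sigma2 * sigma1
def yy : B3 := sigma1 * sigma2
def zz : B3 := xx ^ 2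

lemma zz_def : zz = xx * xx := by rw [zz, pow_two]

lemma braid : sigma1 * sigma2 * sigma1 = sigma2 * sigma1 * sigma2 := by
  have h : (PresentedGroup.mk _ (FreeGroup.of 0 * FreeGroup.of 1 * FreeGroup.of 0 *
      (FreeGroup.of 1 * FreeGroup.of 0 * FreeGroup.of 1)⁻¹) : B3) = 1 :=
    (QuotientGroup.eq_one_iff _).2 (Subgroup.subset_normalClosure (Set.mem_singleton _))
  simp only [_root_.map_mul, _root_.map_inv] at h
  exact mul_inv_eq_one.mp h

lemma zz_eq_yy3 : zz = yy ^ 3 := by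
  rw [zz_def, pow_succ, pow_two]
  show sigma1 * sigma2 * sigma1 * (sigma1 * sigma2 * sigma1) = sigma1 * sigma2 * (sigma1 * sigma2) * (sigma1 * sigma2)
  nth_rewrite 2 [braid]
  group

lemma xx_s1 : xx * sigma1 = sigma2 * xx := by
  show sigma1 * sigma2 * sigma1 * sigma1 = sigma2 * (sigma1 * sigma2 * sigma1)
  nth_rewrite 1 [braid]
  group

lemma xx_s2 : xx * sigma2 = sigma1 * xx := by
  show sigma1 * sigma2 * sigma1 * sigma2 = sigma1 * (sigma1 * sigma2 * sigma1)
  nth_rewrite 2 [braid]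
  group

lemma zz_comm (g : B3) : Commute zz g := by
  have key : ∀ s ∈ Set.range (PresentedGroup.of :
      Fin 2 → B3), Commute zz s := by
    rintro s ⟨i, rfl⟩
    fin_cases i
    · show zz * sigma1 = sigma1 * zz
      rw [zz_def, mul_assoc, xx_s1, ← mul_assoc, xx_s2, mul_assoc]
    · show zz * sigma2 = sigma2 * zz
      rw [zz_def, mul_assoc, xx_s2, ← mul_assoc, xx_s1, mul_assoc]
  have hg : g ∈ Subgroup.closure (Set.range (PresentedGroup.of : Fin 2 → B3)) := by
    rw [PresentedGroup.closure_range_of]; trivial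
  induction hg using Subgroup.closure_induction with
  | mem s hs => exact key s hs
  | one => exact Commute.one_right _
  | mul a b _ _ ha hb => exact Commute.mul_right ha hb
  | inv a _ ha => exact Commute.inv_right ha

lemma zz_zpow_comm (k : ℤ) (g : B3) : g * zz ^ k = zz ^ k * g :=
  ((zz_comm g).zpow_left k).symm.eq

lemma d1 : sigma1 = zz⁻¹ * (yy * yy) * xx := by
  rw [zz_eq_yy3, pow_succ, pow_two, xx, yy]
  group

lemma d1' : sigma1⁻¹ = (zz⁻¹ * xx) * yy := by
  rw [zz_def, xx, yy]
  group

lemma d2 : sigma2 = (zz⁻¹ * xx) * (yy * yy) := by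
  rw [zz_def, xx, yy]
  group

lemma d2' : sigma2⁻¹ = (zz⁻¹ * yy) * xx := by
  rw [zz_eq_yy3, pow_succ, pow_two, xx, yy]
  group

end BurauAux

namespace BurauAux

/-- Alternating normal-form words in `xx` and `yy, yy²`.  First index: `true` iff the
word starts (on the left) with an `xx` syllable; second: `true` iff it ends with `xx`. -/
inductive IsNF : Bool → Bool → B3 → Prop
  | x : IsNF true true xx
  | y (i : ℕ) (hi : i = 1 ∨ i = 2) : IsNF false false (yy ^ i)
  | appx {l : Bool} {g : B3} : IsNF l false g → IsNF l true (g * xx)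
  | appy {l : Bool} {g : B3} (i : ℕ) (hi : i = 1 ∨ i = 2) :
      IsNF l true g → IsNF l false (g * yy ^ i)

def HasNF (g : B3) : Prop :=
  ∃ k : ℤ, g = zz ^ k ∨ ∃ l f h, IsNF l f h ∧ g = zz ^ k * h

lemma hz0 (k : ℤ) : zz ^ k * zz = zz ^ (k + 1) := (_root_.zpow_add_one zz k).symm

lemma hz1 (k : ℤ) (g : B3) : zz ^ k * (g * zz) = zz ^ (k + 1) * g := by
  rw [← (zz_comm g).eq, ← mul_assoc, hz0]

lemma hz2 (k : ℤ) (g u : B3) : zz ^ k * (g * (zz * u)) = zz ^ (k + 1) * (g * u) := by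
  calc zz ^ k * (g * (zz * u)) = zz ^ k * ((g * zz) * u) := by rw [← mul_assoc g]
    _ = zz ^ k * ((zz * g) * u) := by rw [← (zz_comm g).eq]
    _ = (zz ^ k * zz) * (g * u) := by rw [mul_assoc zz g, ← mul_assoc (zz ^ k)]
    _ = zz ^ (k + 1) * (g * u) := by rw [hz0]

lemma hz3 (k m : ℤ) (h : B3) : zz ^ k * (h * zz ^ m) = zz ^ (k + m) * h := by
  rw [zz_zpow_comm m h, ← mul_assoc, ← _root_.zpow_add]

lemma hasNF_mulx {g : B3} (H : HasNF g) : HasNF (g * xx) := by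
  obtain ⟨k, hk | ⟨l, f, h, hN, hk⟩⟩ := H
  · exact ⟨k, Or.inr ⟨true, true, xx, IsNF.x, by rw [hk]⟩⟩
  · cases f
    · exact ⟨k, Or.inr ⟨l, true, h * xx, hN.appx, by rw [hk, mul_assoc]⟩⟩
    · cases hN with
      | x =>
          refine ⟨k + 1, Or.inl ?_⟩
          rw [hk, mul_assoc, ← zz_def, hz0]
      | appx hg =>
          rename_i g'
          refine ⟨k + 1, Or.inr ⟨l, false, g', hg, ?_⟩⟩
          rw [hk, mul_assoc, mul_assoc g', ← zz_def, hz1]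

lemma hasNF_muly {g : B3} (i : ℕ) (hi : i = 1 ∨ i = 2) (H : HasNF g) : HasNF (g * yy ^ i) := by
  obtain ⟨k, hk | ⟨l, f, h, hN, hk⟩⟩ := H
  · exact ⟨k, Or.inr ⟨false, false, yy ^ i, IsNF.y i hi, by rw [hk]⟩⟩
  · cases f
    · cases hN with
      | y j hj =>
          have e : g * yy ^ i = zz ^ k * yy ^ (j + i) := by rw [hk, mul_assoc, ← pow_add]
          rcases hj with rfl | rfl <;> rcases hi with rfl | rfl
          · exact ⟨k, Or.inr ⟨false, false, yy ^ 2, IsNF.y 2 (Or.inr rfl), e⟩⟩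
          · exact ⟨k + 1, Or.inl (by rw [e, ← zz_eq_yy3, hz0])⟩
          · exact ⟨k + 1, Or.inl (by rw [e, ← zz_eq_yy3, hz0])⟩
          · refine ⟨k + 1, Or.inr ⟨false, false, yy ^ 1, IsNF.y 1 (Or.inl rfl), ?_⟩⟩
            rw [e, show (2 + 2 : ℕ) = 3 + 1 by norm_num, pow_add, ← zz_eq_yy3, ← mul_assoc,
              hz0]
      | appy j hj hg' =>
          rename_i g'
          have e : g * yy ^ i = zz ^ k * (g' * yy ^ (j + i)) := by
            rw [hk, mul_assoc, mul_assoc g', ← pow_add]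
          rcases hj with rfl | rfl <;> rcases hi with rfl | rfl
          · exact ⟨k, Or.inr ⟨l, false, g' * yy ^ 2, hg'.appy 2 (Or.inr rfl), e⟩⟩
          · exact ⟨k + 1, Or.inr ⟨l, true, g', hg', by rw [e, ← zz_eq_yy3, hz1]⟩⟩
          · exact ⟨k + 1, Or.inr ⟨l, true, g', hg', by rw [e, ← zz_eq_yy3, hz1]⟩⟩
          · refine ⟨k + 1, Or.inr ⟨l, false, g' * yy ^ 1, hg'.appy 1 (Or.inl rfl), ?_⟩⟩
            rw [e, show (2 + 2 : ℕ) = 3 + 1 by norm_num, pow_add, ← zz_eq_yy3, hz2]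
    · exact ⟨k, Or.inr ⟨l, false, h * yy ^ i, hN.appy i hi, by rw [hk, mul_assoc]⟩⟩

lemma hasNF_mulz (m : ℤ) {g : B3} (H : HasNF g) : HasNF (g * zz ^ m) := by
  obtain ⟨k, hk | ⟨l, f, h, hN, hk⟩⟩ := H
  · exact ⟨k + m, Or.inl (by rw [hk, ← _root_.zpow_add])⟩
  · exact ⟨k + m, Or.inr ⟨l, f, h, hN, by rw [hk, mul_assoc, hz3]⟩⟩

lemma hasNF_mulzinv {g : B3} (H : HasNF g) : HasNF (g * zz⁻¹) := by
  simpa using hasNF_mulz (-1) H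

lemma hasNF_mul_s1 {g : B3} (H : HasNF g) : HasNF (g * sigma1) := by
  rw [d1, ← mul_assoc g, ← mul_assoc g]
  have h2 := hasNF_muly 2 (Or.inr rfl) (hasNF_mulzinv H)
  rw [pow_two] at h2
  exact hasNF_mulx h2

lemma hasNF_mul_s1' {g : B3} (H : HasNF g) : HasNF (g * sigma1⁻¹) := by
  rw [d1', ← mul_assoc g, ← mul_assoc g]
  have h2 := hasNF_muly 1 (Or.inl rfl) (hasNF_mulx (hasNF_mulzinv H))
  rw [pow_one] at h2
  exact h2

lemma hasNF_mul_s2 {g : B3} (H : HasNF g) : HasNF (g * sigma2) := by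
  rw [d2, ← mul_assoc g, ← mul_assoc g]
  have h2 := hasNF_muly 2 (Or.inr rfl) (hasNF_mulx (hasNF_mulzinv H))
  rw [pow_two] at h2
  exact h2

lemma hasNF_mul_s2' {g : B3} (H : HasNF g) : HasNF (g * sigma2⁻¹) := by
  rw [d2', ← mul_assoc g, ← mul_assoc g]
  have h2 := hasNF_muly 1 (Or.inl rfl) (hasNF_mulzinv H)
  rw [pow_one] at h2
  exact hasNF_mulx h2

lemma hasNF_all (g : B3) : HasNF g := by
  induction g using PresentedGroup.induction_on with
  | _ w =>
    rw [← FreeGroup.mk_toWord (x := w)]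
    induction w.toWord using List.reverseRecOn with
    | nil => exact ⟨0, Or.inl (by rw [_root_.zpow_zero]; rfl)⟩
    | append_singleton L p ih =>
        obtain ⟨i, b⟩ := p
        have hsplit : (PresentedGroup.mk _ (FreeGroup.mk (L ++ [(i, b)])) : B3) =
            PresentedGroup.mk _ (FreeGroup.mk L) *
              PresentedGroup.mk _ (FreeGroup.mk [(i, b)]) := by
          rw [← _root_.map_mul, FreeGroup.mul_mk]
        rw [hsplit]
        fin_cases i <;> cases b
        · exact hasNF_mul_s1' ih
        · exact hasNF_mul_s1 ih
        · exact hasNF_mul_s2' ih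
        · exact hasNF_mul_s2 ih

end BurauAux

namespace BurauAux

open UpperHalfPlane

def Xm : Matrix.SpecialLinearGroup (Fin 2) ℤ := Smat * Tmat * Smat
def Ym : Matrix.SpecialLinearGroup (Fin 2) ℤ := Smat * Tmat
def wz : Matrix.SpecialLinearGroup (Fin 2) ℤ :=
  ⟨!![-1, 0; 0, -1], by norm_num [Matrix.det_fin_two_of]⟩

lemma Xm_coe : (Xm : Matrix (Fin 2) (Fin 2) ℤ) = !![0, 1; -1, 0] := by
  show (Smat.1 * Tmat.1) * Smat.1 = _
  norm_num [Smat, Tmat, Matrix.mul_fin_two]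

lemma Ym_coe : (Ym : Matrix (Fin 2) (Fin 2) ℤ) = !![0, 1; -1, 1] := by
  show Smat.1 * Tmat.1 = _
  norm_num [Smat, Tmat, Matrix.mul_fin_two]

lemma Ym2_coe : ((Ym ^ 2 : Matrix.SpecialLinearGroup (Fin 2) ℤ) :
    Matrix (Fin 2) (Fin 2) ℤ) = !![-1, 1; -1, 0] := by
  rw [Matrix.SpecialLinearGroup.coe_pow, Ym_coe, pow_two]
  norm_num [Matrix.mul_fin_two]

lemma wz_coe_neg : (wz : Matrix (Fin 2) (Fin 2) ℤ) = -1 := by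
  show !![(-1 : ℤ), 0; 0, -1] = -1
  rw [Matrix.one_fin_two]
  ext i j
  fin_cases i <;> fin_cases j <;> simp

lemma Xm_sq : Xm ^ 2 = wz := by
  apply Subtype.ext
  rw [Matrix.SpecialLinearGroup.coe_pow, Xm_coe, pow_two]
  show _ = wz.1
  norm_num [wz, Matrix.mul_fin_two]

lemma wz_center : wz ∈ Subgroup.center (Matrix.SpecialLinearGroup (Fin 2) ℤ) := by
  rw [Subgroup.mem_center_iff]
  intro g
  apply Subtype.ext
  rw [Matrix.SpecialLinearGroup.coe_mul, Matrix.SpecialLinearGroup.coe_mul, wz_coe_neg,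
    mul_neg_one, neg_one_mul]

lemma center_desc {c : Matrix.SpecialLinearGroup (Fin 2) ℤ}
    (hc : c ∈ Subgroup.center (Matrix.SpecialLinearGroup (Fin 2) ℤ)) : c = 1 ∨ c = wz := by
  obtain ⟨r, hr, hs⟩ := Matrix.SpecialLinearGroup.mem_center_iff.mp hc
  rw [Fintype.card_fin] at hr
  have hr' : r = 1 ∨ r = -1 := mul_self_eq_one_iff.mp (by rw [← pow_two]; exact hr)
  rcases hr' with rfl | rfl
  · left
    apply Subtype.ext
    rw [← hs]
    simp
  · right
    apply Subtype.ext
    rw [← hs, wz_coe_neg]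
    simp

lemma smul_coe (g : Matrix.SpecialLinearGroup (Fin 2) ℤ) (z : ℍ) :
    ((g • z : ℍ) : ℂ) = (((g : Matrix (Fin 2) (Fin 2) ℤ) 0 0 : ℂ) * (z : ℂ) +
        ((g : Matrix (Fin 2) (Fin 2) ℤ) 0 1 : ℂ)) /
      (((g : Matrix (Fin 2) (Fin 2) ℤ) 1 0 : ℂ) * (z : ℂ) +
        ((g : Matrix (Fin 2) (Fin 2) ℤ) 1 1 : ℂ)) := by
  rw [UpperHalfPlane.specialLinearGroup_apply]
  simp only [algebraMap_int_eq, Int.coe_castRingHom, Complex.ofReal_intCast]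

lemma coe_ne_zero (z : ℍ) : (z : ℂ) ≠ 0 := z.ne_zero

lemma one_sub_coe_ne_zero (z : ℍ) : 1 - (z : ℂ) ≠ 0 := by
  intro h
  have h2 : (1 - (z : ℂ)).im = 0 := by rw [h]; rfl
  simp only [Complex.sub_im, Complex.one_im, zero_sub, neg_eq_zero] at h2
  exact z.im_ne_zero h2

lemma Xm_smul_re {z : ℍ} (hz : 0 < z.re) : (Xm • z).re < 0 := by
  have hz0 := coe_ne_zero z
  have hcoe : ((Xm • z : ℍ) : ℂ) = -(z : ℂ)⁻¹ := by
    rw [smul_coe, Xm_coe]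
    push_cast
    field_simp
    simp
    rw [div_neg, div_self hz0]
  show ((Xm • z : ℍ) : ℂ).re < 0
  rw [hcoe, Complex.neg_re, Complex.inv_re]
  have h0 : 0 < Complex.normSq (z : ℂ) := Complex.normSq_pos.mpr hz0
  have hp : 0 < (z : ℂ).re / Complex.normSq (z : ℂ) :=
    div_pos (by rwa [UpperHalfPlane.coe_re]) h0
  linarith

lemma Ym_smul_re {z : ℍ} (hz : z.re < 0) : 0 < (Ym • z).re := by
  have hcoe : ((Ym • z : ℍ) : ℂ) = (1 - (z : ℂ))⁻¹ := by
    rw [smul_coe, Ym_coe]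
    push_cast
    rw [show (1 : ℂ) - (z : ℂ) = -(z:ℂ) + 1 by ring]
    field_simp
    simp
  show 0 < ((Ym • z : ℍ) : ℂ).re
  rw [hcoe, Complex.inv_re]
  have h0 : 0 < Complex.normSq (1 - (z : ℂ)) := Complex.normSq_pos.mpr (one_sub_coe_ne_zero z)
  apply div_pos _ h0
  simp only [Complex.sub_re, Complex.one_re, UpperHalfPlane.coe_re]
  linarith

lemma Ym2_smul_re {z : ℍ} (hz : z.re < 0) : 0 < ((Ym ^ 2) • z).re := by
  have hz0 := coe_ne_zero z
  have hcoe : (((Ym ^ 2) • z : ℍ) : ℂ) = 1 - (z : ℂ)⁻¹ := by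
    rw [smul_coe, Ym2_coe]
    norm_num
    field_simp
    ring_nf
  show 0 < (((Ym ^ 2) • z : ℍ) : ℂ).re
  rw [hcoe, Complex.sub_re, Complex.one_re, Complex.inv_re]
  have h0 : 0 < Complex.normSq (z : ℂ) := Complex.normSq_pos.mpr hz0
  have : (z : ℂ).re / Complex.normSq (z : ℂ) < 0 :=
    div_neg_of_neg_of_pos (by rwa [UpperHalfPlane.coe_re]) h0
  linarith

lemma central_smul_id {c : Matrix.SpecialLinearGroup (Fin 2) ℤ}
    (hc : c ∈ Subgroup.center (Matrix.SpecialLinearGroup (Fin 2) ℤ)) (z : ℍ) : c • z = z := by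
  rcases center_desc hc with rfl | rfl
  · exact one_smul _ z
  · apply UpperHalfPlane.ext
    rw [smul_coe, wz_coe_neg]
    norm_num

end BurauAux

namespace BurauAux

open UpperHalfPlane

section PingPong

variable {τ : B3 →* Matrix.SpecialLinearGroup (Fin 2) ℤ}
  (hx : τ xx = Xm) (hy : τ yy = Ym)

include hx hy in
lemma pp {l f : Bool} {h : B3} (hN : IsNF l f h) :
    ∀ z : ℍ, (f = true → 0 < z.re) → (f = false → z.re < 0) →
      ((l = true → ((τ h) • z).re < 0) ∧ (l = false → 0 < ((τ h) • z).re)) := by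
  induction hN with
  | x =>
      intro z h1 _
      rw [hx]
      exact ⟨fun _ => Xm_smul_re (h1 rfl), by simp⟩
  | y i hi =>
      intro z _ h2
      rw [map_pow, hy]
      refine ⟨by simp, fun _ => ?_⟩
      rcases hi with rfl | rfl
      · rw [pow_one]; exact Ym_smul_re (h2 rfl)
      · exact Ym2_smul_re (h2 rfl)
  | appx hg IH =>
      intro z h1 _
      rw [_root_.map_mul, hx, mul_smul]
      exact IH (Xm • z) (by simp) (fun _ => Xm_smul_re (h1 rfl))
  | appy i hi hg IH =>
      intro z _ h2
      rw [_root_.map_mul, map_pow, hy, mul_smul]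
      have hB : 0 < ((Ym ^ i) • z).re := by
        rcases hi with rfl | rfl
        · rw [pow_one]; exact Ym_smul_re (h2 rfl)
        · exact Ym2_smul_re (h2 rfl)
      exact IH ((Ym ^ i) • z) (fun _ => hB) (by simp)

def zA : ℍ := ⟨⟨-1, 1⟩, by norm_num⟩
def zB : ℍ := ⟨⟨1, 1⟩, by norm_num⟩

lemma zA_re : zA.re = -1 := rfl
lemma zB_re : zB.re = 1 := rfl

include hx hy in
lemma noCentral_ff {h : B3} (hN : IsNF false false h)
    (hc : τ h ∈ Subgroup.center (Matrix.SpecialLinearGroup (Fin 2) ℤ)) : False := by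
  have := (pp hx hy hN zA (by simp) (fun _ => by rw [zA_re]; norm_num)).2 rfl
  rw [central_smul_id hc, zA_re] at this
  norm_num at this

include hx hy in
lemma noCentral_tt {h : B3} (hN : IsNF true true h)
    (hc : τ h ∈ Subgroup.center (Matrix.SpecialLinearGroup (Fin 2) ℤ)) : False := by
  have := (pp hx hy hN zB (fun _ => by rw [zB_re]; norm_num) (by simp)).1 rfl
  rw [central_smul_id hc, zB_re] at this
  norm_num at this

end PingPong

lemma prepx {l f : Bool} {h : B3} (hN : IsNF l f h) (hl : l = false) :
    IsNF true f (xx * h) := by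
  induction hN with
  | x => simp at hl
  | y i hi => exact IsNF.x.appy i hi
  | appx hg IH => rw [← mul_assoc]; exact (IH hl).appx
  | appy i hi hg IH => rw [← mul_assoc]; exact (IH hl).appy i hi

lemma prepy {l f : Bool} (i : ℕ) (hi : i = 1 ∨ i = 2) {h : B3} (hN : IsNF l f h)
    (hl : l = true) : IsNF false f (yy ^ i * h) := by
  induction hN with
  | x => exact (IsNF.y i hi).appx
  | y j hj => simp at hl
  | appx hg IH => rw [← mul_assoc]; exact (IH hl).appx
  | appy j hj hg IH => rw [← mul_assoc]; exact (IH hl).appy j hj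

section NoCentral

variable {τ : B3 →* Matrix.SpecialLinearGroup (Fin 2) ℤ}
  (hx : τ xx = Xm) (hy : τ yy = Ym)

lemma centerB (a : Matrix.SpecialLinearGroup (Fin 2) ℤ)
    {c : Matrix.SpecialLinearGroup (Fin 2) ℤ}
    (hc : c ∈ Subgroup.center (Matrix.SpecialLinearGroup (Fin 2) ℤ)) :
    a * c * a⁻¹ = c := by
  have hcomm : a * c = c * a := by
    have h := Subgroup.mem_center_iff.mp hc a
    first
      | exact h
      | exact h.symm
  rw [hcomm, mul_assoc, mul_inv_cancel, mul_one]

include hx in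
lemma tau_zz : τ zz = wz := by
  rw [zz, map_pow, hx, Xm_sq]

include hx hy in
lemma noCentral_tf {h : B3} (hN : IsNF true false h)
    (hc : τ h ∈ Subgroup.center (Matrix.SpecialLinearGroup (Fin 2) ℤ)) : False := by
  cases hN with
  | appy j hj hg =>
    rename_i g
    rcases hj with rfl | rfl
    · -- h = g * yy, use H = (yy^2 * g) * yy^2 = yy^2 * h * (yy^2)⁻¹ * zz
      have hH : (yy ^ 2 * g) * yy ^ 2 = yy ^ 2 * (g * yy ^ 1) * (yy ^ 2)⁻¹ * zz := by
        rw [zz_eq_yy3]; group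
      have hNF : IsNF false false ((yy ^ 2 * g) * yy ^ 2) :=
        (prepy 2 (Or.inr rfl) hg rfl).appy 2 (Or.inr rfl)
      apply noCentral_ff hx hy hNF
      rw [hH, _root_.map_mul, _root_.map_mul, _root_.map_mul, _root_.map_inv, tau_zz hx]
      exact Subgroup.mul_mem _ (by rw [centerB _ hc]; exact hc) wz_center
    · -- h = g * yy^2, use H = (yy * g) * yy = yy * h * yy⁻¹
      have hH : (yy ^ 1 * g) * yy ^ 1 = yy * (g * yy ^ 2) * yy⁻¹ := by
        group
      have hNF : IsNF false false ((yy ^ 1 * g) * yy ^ 1) :=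
        (prepy 1 (Or.inl rfl) hg rfl).appy 1 (Or.inl rfl)
      apply noCentral_ff hx hy hNF
      rw [hH, _root_.map_mul, _root_.map_mul, _root_.map_inv]
      rw [centerB _ hc]
      exact hc

include hx hy in
lemma noCentral_ft {h : B3} (hN : IsNF false true h)
    (hc : τ h ∈ Subgroup.center (Matrix.SpecialLinearGroup (Fin 2) ℤ)) : False := by
  cases hN with
  | appx hg =>
    rename_i g
    have hH : xx * g = xx * (g * xx) * xx⁻¹ := by group
    have hNF : IsNF true false (xx * g) := prepx hg rfl
    apply noCentral_tf hx hy hNF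
    rw [hH, _root_.map_mul, _root_.map_mul, _root_.map_inv]
    rw [centerB _ hc]
    exact hc

include hx hy in
lemma noCentral {l f : Bool} {h : B3} (hN : IsNF l f h)
    (hc : τ h ∈ Subgroup.center (Matrix.SpecialLinearGroup (Fin 2) ℤ)) : False := by
  cases l <;> cases f
  · exact noCentral_ff hx hy hN hc
  · exact noCentral_ft hx hy hN hc
  · exact noCentral_tf hx hy hN hc
  · exact noCentral_tt hx hy hN hc

end NoCentral

end BurauAux

namespace BurauAux

section Rho

variable {ρ : B3 →* Matrix (Fin 2) (Fin 2) (LaurentPolynomial ℤ)}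
  (h1 : ρ sigma1 = BurauM1) (h2 : ρ sigma2 = BurauM2)

include h1 h2 in
lemma rho_zz : ρ zz = !![T 3, 0; 0, T 3] := by
  have hxx : ρ xx = !![0, -T 1; -T 2, 0] := by
    rw [xx, _root_.map_mul, _root_.map_mul, h1, h2, BurauM1, BurauM2]
    rw [Matrix.mul_fin_two, Matrix.mul_fin_two]
    have e2 : (T 1 * T 1 : LaurentPolynomial ℤ) = T 2 := by rw [← T_add]; norm_num
    congr 1 <;> ring_nf <;> rw [← e2] <;> ring
  rw [zz, map_pow, hxx, pow_two, Matrix.mul_fin_two]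
  have e3 : (T 1 * T 2 : LaurentPolynomial ℤ) = T 3 := by rw [← T_add]; norm_num
  have e3' : (T 2 * T 1 : LaurentPolynomial ℤ) = T 3 := by rw [← T_add]; norm_num
  congr 1 <;> ring_nf <;> first
    | rfl
    | (rw [← e3]; ring)
    | (rw [← e3']; ring)

include h1 h2 in
lemma rho_zz_pow (n : ℕ) : ρ (zz ^ n) = !![T (3 * n), 0; 0, T (3 * n)] := by
  induction n with
  | zero => simp [Matrix.one_fin_two, ← T_zero]
  | succ n ih =>
      rw [pow_succ, _root_.map_mul, ih, rho_zz h1 h2]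
      have : (T (3 * n) * T 3 : LaurentPolynomial ℤ) = T (3 * (n + 1)) := by
        rw [← T_add]; congr 1 <;> (push_cast; ring)
      rw [Matrix.mul_fin_two]
      congr 1 <;> simp [this]

lemma T_eq_one_imp {m : ℤ} (h : (T m : LaurentPolynomial ℤ) = 1) : m = 0 := by
  by_contra hm
  have hne : ¬ ((0:ℤ) = m) := fun hc => hm hc.symm
  rw [← T_zero] at h
  have h0 := congrArg (fun p : LaurentPolynomial ℤ => p.coeff m) h
  simp only [T_apply] at h0
  simp [hne] at h0

include h1 h2 in
lemma zz_pow_eq_one {n : ℕ} (h : ρ (zz ^ n) = 1) : n = 0 := by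
  have := rho_zz_pow h1 h2 (ρ := ρ) n
  rw [h] at this
  have h00 := congrFun (congrFun this 0) 0
  rw [Matrix.one_apply_eq] at h00
  have : ((3 : ℤ) * n) = 0 := T_eq_one_imp (by
    have := h00.symm
    simpa using this)
  omega

end Rho

end BurauAux

open BurauAux

/-- If `ρ₃(φ) = ρ₃(ψ)` and the images `φ*`, `ψ*` of `φ`, `ψ` in `PSL(2,ℤ)` (via
evaluation at `t = -1` and projection) are equal, then `φ·ψ⁻¹ = Δ²ᵏ` for some
integer `k`; moreover `k = 0` is forced, i.e. `φ = ψ`. -/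
theorem burau_eq_and_PSL_eq_implies_eq
    (ρ : B3 →* Matrix (Fin 2) (Fin 2) (LaurentPolynomial ℤ))
    (h1 : ρ sigma1 = BurauM1) (h2 : ρ sigma2 = BurauM2)
    (τ : B3 →* Matrix.SpecialLinearGroup (Fin 2) ℤ)
    (hτ1 : τ sigma1 = Smat) (hτ2 : τ sigma2 = Tmat)
    (φ ψ : B3)
    (hρ : ρ φ = ρ ψ)
    (hPSL : (QuotientGroup.mk' (Subgroup.center (Matrix.SpecialLinearGroup (Fin 2) ℤ))) (τ φ) =
      (QuotientGroup.mk' (Subgroup.center (Matrix.SpecialLinearGroup (Fin 2) ℤ))) (τ ψ)) :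
    (∃ k : ℤ, φ * ψ⁻¹ = ((sigma1 * sigma2 * sigma1) ^ 2) ^ k) ∧ φ = ψ := by

  have hx : τ xx = Xm := by rw [xx, _root_.map_mul, _root_.map_mul, hτ1, hτ2]; rfl
  have hy : τ yy = Ym := by rw [yy, _root_.map_mul, hτ1, hτ2]; rfl
  set g : B3 := φ * ψ⁻¹ with hg
  -- τ g is central
  obtain ⟨c, hc, hct⟩ := (QuotientGroup.mk'_eq_mk' _).mp hPSL
  have hcinv := Subgroup.inv_mem _ hc
  have hτg : τ g ∈ Subgroup.center (Matrix.SpecialLinearGroup (Fin 2) ℤ) := by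
    have e : τ g = τ φ * c⁻¹ * (τ φ)⁻¹ := by
      rw [hg, _root_.map_mul, _root_.map_inv, ← hct]
      group
    rw [e, centerB _ hcinv]
    exact hcinv
  -- ρ g = 1
  have hρg : ρ g = 1 := by
    rw [hg, _root_.map_mul, hρ, ← _root_.map_mul, mul_inv_cancel, _root_.map_one]
  -- normal form of g
  obtain ⟨k, hk | ⟨l, f, h, hN, hk⟩⟩ := hasNF_all g
  · -- g = zz ^ k ; conclude k = 0
    have hk0 : k = 0 := by
      rcases Int.eq_nat_or_neg k with ⟨n, rfl | rfl⟩
      · have : ρ (zz ^ n) = 1 := by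
          rw [← zpow_natCast, ← hk]; exact hρg
        simpa using zz_pow_eq_one h1 h2 this
      · have hginv : ρ g⁻¹ = 1 := by
          have hmul : ρ g⁻¹ * ρ g = 1 := by
            rw [← _root_.map_mul, inv_mul_cancel, _root_.map_one]
          rw [hρg, mul_one] at hmul
          exact hmul
        have : ρ (zz ^ n) = 1 := by
          have e : zz ^ (n : ℤ) = g⁻¹ := by rw [hk, ← _root_.zpow_neg, neg_neg]
          rw [← zpow_natCast, e]
          exact hginv
        simp [zz_pow_eq_one h1 h2 this]
    have hg1 : g = 1 := by rw [hk, hk0, zpow_zero]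
    constructor
    · exact ⟨0, by rw [zpow_zero]; exact hg1⟩
    · exact mul_inv_eq_one.mp hg1
  · -- impossible: τ h would be central
    exfalso
    have hτh : τ h ∈ Subgroup.center (Matrix.SpecialLinearGroup (Fin 2) ℤ) := by
      have e : τ h = (τ (zz ^ k))⁻¹ * τ g := by
        rw [hk, _root_.map_mul, ← mul_assoc, inv_mul_cancel, one_mul]
      rw [e]
      refine Subgroup.mul_mem _ (Subgroup.inv_mem _ ?_) hτg
      rw [map_zpow, tau_zz hx]
      exact Subgroup.zpow_mem _ wz_center k
    exact noCentral hx hy hN hτh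
end

section
/- Two elements φ, ψ ∈ B_3 are conjugate in B_3 if and only if they have the same exponent sum and their images φ*, ψ* under the surjection B_3 → PSL(2,ℤ) are conjugate in PSL(2,ℤ). -/
open Matrix

abbrev B3rels : Set (FreeGroup (Fin 2)) :=
  {FreeGroup.of 0 * FreeGroup.of 1 * FreeGroup.of 0 *
        (FreeGroup.of 1 * FreeGroup.of 0 * FreeGroup.of 1)⁻¹}

lemma braid : sigma1 * sigma2 * sigma1 = sigma2 * sigma1 * sigma2 := by
  have h : PresentedGroup.mk B3rels (FreeGroup.of 0 * FreeGroup.of 1 * FreeGroup.of 0 *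
      (FreeGroup.of 1 * FreeGroup.of 0 * FreeGroup.of 1)⁻¹) = 1 := by
    apply (QuotientGroup.eq_one_iff _).mpr
    exact Subgroup.subset_normalClosure rfl
  simp only [_root_.map_mul, _root_.map_inv] at h
  rw [mul_inv_eq_one] at h
  exact h

def delta : B3 := sigma1 * sigma2 * sigma1

lemma delta_sigma1 : delta * sigma1 = sigma2 * delta := by
  rw [delta]; conv_lhs => rw [braid]
  group

lemma delta_sigma2 : delta * sigma2 = sigma1 * delta := by
  rw [delta]
  calc sigma1 * sigma2 * sigma1 * sigma2 = sigma1 * (sigma2 * sigma1 * sigma2) := by group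
  _ = sigma1 * (sigma1 * sigma2 * sigma1) := by rw [braid]
  _ = sigma1 * (sigma1 * sigma2 * sigma1) := rfl

lemma deltasq_sigma1 : delta ^ 2 * sigma1 = sigma1 * delta ^ 2 := by
  rw [sq, mul_assoc, delta_sigma1, ← mul_assoc, delta_sigma2, mul_assoc]

lemma deltasq_sigma2 : delta ^ 2 * sigma2 = sigma2 * delta ^ 2 := by
  rw [sq, mul_assoc, delta_sigma2, ← mul_assoc, delta_sigma1, mul_assoc]

lemma deltasq_mem_center : delta ^ 2 ∈ Subgroup.center B3 := by
  rw [Subgroup.mem_center_iff]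
  intro g
  have hg : g ∈ Subgroup.centralizer {delta ^ 2} := by
    apply PresentedGroup.generated_by
    intro j
    fin_cases j <;> rw [Subgroup.mem_centralizer_iff] <;> intro h hh <;>
      rcases hh with rfl
    · exact deltasq_sigma1
    · exact deltasq_sigma2
  have := Subgroup.mem_centralizer_iff.mp hg (delta ^ 2) rfl
  exact this.symm

lemma zpowers_deltasq_normal : (Subgroup.zpowers (delta ^ 2)).Normal := by
  constructor
  intro n hn g
  obtain ⟨k, rfl⟩ := Subgroup.mem_zpowers_iff.mp hn
  have hc : (delta ^ 2) ^ k ∈ Subgroup.center B3 := Subgroup.zpow_mem _ deltasq_mem_center k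
  rw [Subgroup.mem_center_iff] at hc
  rw [hc g, mul_inv_cancel_right]
  exact Subgroup.zpow_mem _ (Subgroup.mem_zpowers _) k

lemma normalClosure_deltasq :
    Subgroup.normalClosure {delta ^ 2} = Subgroup.zpowers (delta ^ 2) := by
  apply le_antisymm
  · have := zpowers_deltasq_normal
    exact Subgroup.normalClosure_le_normal (by
      intro x hx; rcases hx with rfl; exact Subgroup.mem_zpowers _)
  · rw [Subgroup.zpowers_le]
    exact Subgroup.subset_normalClosure rfl

abbrev SL2Z := Matrix.SpecialLinearGroup (Fin 2) ℤ

def Amat : SL2Z := Smat * Tmat * Smat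
def Bmat : SL2Z := Smat * Tmat

lemma Amat_coe : (Amat : Matrix (Fin 2) (Fin 2) ℤ) = !![0, 1; -1, 0] := by
  rw [Amat, Matrix.SpecialLinearGroup.coe_mul, Matrix.SpecialLinearGroup.coe_mul]; simp only [Smat, Tmat]
  ext i j
  fin_cases i <;> fin_cases j <;>
    simp [Matrix.mul_apply, Fin.sum_univ_two]

lemma Bmat_coe : (Bmat : Matrix (Fin 2) (Fin 2) ℤ) = !![0, 1; -1, 1] := by
  rw [Bmat, Matrix.SpecialLinearGroup.coe_mul]; simp only [Smat, Tmat]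
  ext i j
  fin_cases i <;> fin_cases j <;>
    simp [Matrix.mul_apply, Fin.sum_univ_two]

lemma Bmat_sq_coe : ((Bmat ^ 2 : SL2Z) : Matrix (Fin 2) (Fin 2) ℤ) = !![-1, 1; -1, 0] := by
  rw [sq, Matrix.SpecialLinearGroup.coe_mul, Bmat_coe]
  ext i j
  fin_cases i <;> fin_cases j <;> simp [Matrix.mul_apply, Fin.sum_univ_two]

lemma Amat_sq : Amat ^ 2 = -1 := by
  apply Subtype.ext
  rw [sq, Matrix.SpecialLinearGroup.coe_mul, Amat_coe]
  ext i j
  fin_cases i <;> fin_cases j <;>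
    simp [Matrix.mul_apply, Fin.sum_univ_two]

lemma Bmat_cube : Bmat ^ 3 = -1 := by
  apply Subtype.ext
  rw [pow_succ, Matrix.SpecialLinearGroup.coe_mul, Bmat_sq_coe, Bmat_coe]
  ext i j
  fin_cases i <;> fin_cases j <;>
    simp [Matrix.mul_apply, Fin.sum_univ_two]

lemma neg_one_mem_center : (-1 : SL2Z) ∈ Subgroup.center SL2Z := by
  rw [Subgroup.mem_center_iff]
  intro g
  rw [mul_neg_one, neg_one_mul]

lemma mem_center_SL2Z {g : SL2Z} (hg : g ∈ Subgroup.center SL2Z) : g = 1 ∨ g = -1 := by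
  have hS := Subgroup.mem_center_iff.mp hg Smat
  have hT := Subgroup.mem_center_iff.mp hg Tmat
  set a := g.1 0 0 with ha
  set b := g.1 0 1 with hb
  set c := g.1 1 0 with hcc
  set d := g.1 1 1 with hd
  have hdet : a * d - b * c = 1 := by
    have := g.2
    rwa [Matrix.det_fin_two] at this
  have eS := congrArg (fun m : SL2Z => m.1) hS
  have eT := congrArg (fun m : SL2Z => m.1) hT
  simp only [Matrix.SpecialLinearGroup.coe_mul] at eS eT; simp only [Smat, Tmat] at eS eT
  have e1 := congrFun (congrFun eS 0) 0
  have e2 := congrFun (congrFun eS 0) 1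
  have e3 := congrFun (congrFun eT 0) 0
  simp [Matrix.mul_apply, Fin.sum_univ_two, ← ha, ← hb, ← hcc, ← hd] at e1 e2 e3
  -- e1 : a + c = a ;  e2 : b + d = a + b ; e3 : a - b = a   (roughly)
  have hc0 : c = 0 := by linarith
  have hda : d = a := by linarith
  have hb0 : b = 0 := by linarith
  have haa : a * a = 1 := by rw [hda, hb0, hc0] at hdet; linarith
  rcases mul_self_eq_one_iff.mp haa with h1 | h1
  · left
    apply Subtype.ext
    ext i j
    fin_cases i <;> fin_cases j <;>
      simp [← ha, ← hb, ← hcc, ← hd, h1, hb0, hc0, hda]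
  · right
    apply Subtype.ext
    ext i j
    fin_cases i <;> fin_cases j <;>
      simp [← ha, ← hb, ← hcc, ← hd, h1, hb0, hc0, hda]

lemma Smat_eq_T : Smat = ModularGroup.T := by
  apply Subtype.ext
  rw [Smat, ModularGroup.T]

lemma Smat_zpow_coe (m : ℤ) : ((Smat ^ m : SL2Z) : Matrix (Fin 2) (Fin 2) ℤ) = !![1, m; 0, 1] := by
  rw [Smat_eq_T, ModularGroup.coe_T_zpow]

def Hgen : Subgroup SL2Z := Subgroup.closure {Smat, Tmat}

lemma Smat_mem : Smat ∈ Hgen := Subgroup.subset_closure (by simp)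
lemma Tmat_mem : Tmat ∈ Hgen := Subgroup.subset_closure (by simp)
lemma Amat_mem : Amat ∈ Hgen := by
  exact Subgroup.mul_mem _ (Subgroup.mul_mem _ Smat_mem Tmat_mem) Smat_mem
lemma neg_one_mem : (-1 : SL2Z) ∈ Hgen := by
  rw [← Amat_sq, sq]; exact Subgroup.mul_mem _ Amat_mem Amat_mem
lemma neg_mem {g : SL2Z} (hg : g ∈ Hgen) : -g ∈ Hgen := by
  rw [← neg_one_mul]
  exact Subgroup.mul_mem _ neg_one_mem hg

lemma sl2z_entries_mul (g h : SL2Z) (i j : Fin 2) :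
    (g * h).1 i j = g.1 i 0 * h.1 0 j + g.1 i 1 * h.1 1 j := by
  rw [Matrix.SpecialLinearGroup.coe_mul, Matrix.mul_apply, Fin.sum_univ_two]

lemma mem_Hgen (g : SL2Z) : g ∈ Hgen := by
  suffices h : ∀ n : ℕ, ∀ g : SL2Z, (g.1 1 0).natAbs = n → g ∈ Hgen by
    exact h _ g rfl
  intro n
  induction n using Nat.strong_induction_on with
  | _ n ih =>
  intro g hn
  by_cases hc : g.1 1 0 = 0
  · -- c = 0
    have hdet : g.1 0 0 * g.1 1 1 - g.1 0 1 * g.1 1 0 = 1 := by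
      have := g.2; rwa [Matrix.det_fin_two] at this
    rw [hc, mul_zero, sub_zero] at hdet
    rcases Int.mul_eq_one_iff_eq_one_or_neg_one.mp hdet with ⟨h1, h2⟩ | ⟨h1, h2⟩
    · have hg : g = Smat ^ (g.1 0 1) := by
        apply Subtype.ext
        rw [Smat_zpow_coe]
        ext i j
        fin_cases i <;> fin_cases j <;> simp [h1, h2, hc]
      rw [hg]
      exact Subgroup.zpow_mem _ Smat_mem _
    · have hg : g = -(Smat ^ (-(g.1 0 1))) := by
        apply Subtype.ext
        rw [Matrix.SpecialLinearGroup.coe_neg, Smat_zpow_coe]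
        ext i j
        fin_cases i <;> fin_cases j <;> simp [h1, h2, hc]
      rw [hg]
      exact neg_mem (Subgroup.zpow_mem _ Smat_mem _)
  · -- c ≠ 0 : Euclidean step
    set a := g.1 0 0 with ha
    set c := g.1 1 0 with hcdef
    set q : ℤ := a / c with hq
    have hS00 : (Smat ^ (-q) * g).1 0 0 = a % c := by
      rw [sl2z_entries_mul]
      have h0 : ((Smat ^ (-q) : SL2Z)).1 0 0 = 1 := by rw [Smat_zpow_coe]; simp
      have h1 : ((Smat ^ (-q) : SL2Z)).1 0 1 = -q := by rw [Smat_zpow_coe]; simp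
      rw [h0, h1, Int.emod_def]
      ring
    have hS10 : (Smat ^ (-q) * g).1 1 0 = c := by
      rw [sl2z_entries_mul]
      have h0 : ((Smat ^ (-q) : SL2Z)).1 1 0 = 0 := by rw [Smat_zpow_coe]; simp
      have h1 : ((Smat ^ (-q) : SL2Z)).1 1 1 = 1 := by rw [Smat_zpow_coe]; simp
      rw [h0, h1]
      ring
    have key : (Amat * (Smat ^ (-q) * g)).1 1 0 = -(a % c) := by
      rw [sl2z_entries_mul]
      have h0 : Amat.1 1 0 = -1 := by rw [Amat_coe]; simp
      have h1 : Amat.1 1 1 = 0 := by rw [Amat_coe]; simp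
      rw [h0, h1, hS00]
      ring
    have hlt : ((Amat * (Smat ^ (-q) * g)).1 1 0).natAbs < n := by
      rw [key, Int.natAbs_neg]
      have h1 : 0 ≤ a % c := Int.emod_nonneg a hc
      have h2 : a % c < |c| := Int.emod_lt_abs a hc
      rw [Int.abs_eq_natAbs] at h2
      have h3 : c.natAbs = n := hn
      omega
    have hin := ih _ hlt _ rfl
    have hg : g = Smat ^ q * (Amat⁻¹ * (Amat * (Smat ^ (-q) * g))) := by
      group
    rw [hg]
    exact Subgroup.mul_mem _ (Subgroup.zpow_mem _ Smat_mem _)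
      (Subgroup.mul_mem _ (Subgroup.inv_mem _ Amat_mem) hin)

open UpperHalfPlane ModularGroup

lemma coe_smul_int (g : SL2Z) (z : ℍ) :
    ((g • z : ℍ) : ℂ) =
      ((g.1 0 0 : ℂ) * z + (g.1 0 1 : ℂ)) / ((g.1 1 0 : ℂ) * z + (g.1 1 1 : ℂ)) := by
  rw [coe_specialLinearGroup_apply]
  simp

lemma Amat_smul_re (z : ℍ) (hz : 0 < z.re) : (Amat • z).re < 0 := by
  have hre : (Amat • z).re = -z.re / Complex.normSq (z : ℂ) := by
    rw [← UpperHalfPlane.coe_re, coe_smul_int Amat z, Amat_coe]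
    norm_num [Complex.div_re, Complex.normSq_neg, UpperHalfPlane.coe_re]
    ring
  rw [hre]
  apply div_neg_of_neg_of_pos (by linarith) z.normSq_pos

lemma Bmat_smul_re (z : ℍ) (hz : z.re < 0) : 0 < (Bmat • z).re := by
  have hne : ((-z + 1 : ℂ)) ≠ 0 := by
    intro hh
    apply z.im_ne_zero
    have := congrArg Complex.im hh
    simpa using this
  have hre : (Bmat • z).re = (1 - z.re) / Complex.normSq (-(z:ℂ) + 1) := by
    rw [← UpperHalfPlane.coe_re, coe_smul_int Bmat z, Bmat_coe]
    norm_num [Complex.div_re, UpperHalfPlane.coe_re]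
    ring
  rw [hre]
  apply div_pos (by linarith) (Complex.normSq_pos.mpr hne)

lemma Bmat_sq_smul_re (z : ℍ) (hz : z.re < 0) : 0 < ((Bmat ^ 2) • z).re := by
  have hre : ((Bmat ^ 2) • z).re
      = (z.re * z.re - z.re + z.im * z.im) / Complex.normSq (z : ℂ) := by
    rw [← UpperHalfPlane.coe_re, coe_smul_int (Bmat ^ 2) z, Bmat_sq_coe]
    norm_num [Complex.div_re, Complex.normSq_neg, Complex.normSq_apply,
      UpperHalfPlane.coe_re, UpperHalfPlane.coe_im]
    ring
  rw [hre]
  have him := z.im_pos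
  apply div_pos (by nlinarith) z.normSq_pos
open Pointwise

abbrev PSL := SL2Z ⧸ Subgroup.center SL2Z

lemma center_smul_triv (g : SL2Z) (hg : g ∈ Subgroup.center SL2Z) (z : ℍ) : g • z = z := by
  rcases mem_center_SL2Z hg with rfl | rfl
  · simp
  · exact (SL_neg_smul 1 z).trans (one_smul _ z)

noncomputable def pslPerm : PSL →* Equiv.Perm ℍ :=
  QuotientGroup.lift _ (MulAction.toPermHom SL2Z ℍ) (fun g hg => by
    ext z
    exact congrArg UpperHalfPlane.coe (center_smul_triv g hg z))

noncomputable instance : MulAction PSL ℍ := MulAction.compHom ℍ pslPerm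

lemma psl_smul (g : SL2Z) (z : ℍ) :
    (QuotientGroup.mk' (Subgroup.center SL2Z) g) • z = g • z := rfl

def powZModHom (n : ℕ) {G : Type*} [Group G] (x : G) (hx : x ^ (n : ℤ) = 1) :
    Multiplicative (ZMod n) →* G :=
  AddMonoidHom.toMultiplicativeLeft
    (ZMod.lift n ⟨(zmultiplesHom (Additive G)) (Additive.ofMul x), by
      apply Additive.toMul.injective
      simp only [zmultiplesHom_apply, toMul_zsmul, toMul_ofMul, hx, toMul_zero]⟩)

lemma powZModHom_apply (n : ℕ) {G : Type*} [Group G] (x : G) (hx : x ^ (n : ℤ) = 1) (k : ℤ) :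
    powZModHom n x hx (Multiplicative.ofAdd ((k : ZMod n))) = x ^ k := by
  change Additive.toMul (ZMod.lift n _ (k : ZMod n)) = x ^ k
  simp [ZMod.lift_coe, zmultiplesHom_apply]

def Hfam : Bool → Type
  | false => Multiplicative (ZMod 2)
  | true => Multiplicative (ZMod 3)

instance : (b : Bool) → Group (Hfam b)
  | false => inferInstanceAs (Group (Multiplicative (ZMod 2)))
  | true => inferInstanceAs (Group (Multiplicative (ZMod 3)))

def Acl : PSL := QuotientGroup.mk' (Subgroup.center SL2Z) Amat
def Bcl : PSL := QuotientGroup.mk' (Subgroup.center SL2Z) Bmat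

lemma Acl_sq : Acl ^ (2 : ℤ) = 1 := by
  rw [Acl, ← map_zpow]
  rw [QuotientGroup.mk'_apply, QuotientGroup.eq_one_iff]
  have : Amat ^ (2 : ℤ) = -1 := by
    rw [show (2 : ℤ) = ((2 : ℕ) : ℤ) from rfl, zpow_natCast, Amat_sq]
  rw [this]
  exact neg_one_mem_center

lemma Bcl_cube : Bcl ^ (3 : ℤ) = 1 := by
  rw [Bcl, ← map_zpow]
  rw [QuotientGroup.mk'_apply, QuotientGroup.eq_one_iff]
  have : Bmat ^ (3 : ℤ) = -1 := by
    rw [show (3 : ℤ) = ((3 : ℕ) : ℤ) from rfl, zpow_natCast, Bmat_cube]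
  rw [this]
  exact neg_one_mem_center

def fpp : ∀ b : Bool, Hfam b →* PSL
  | false => powZModHom 2 Acl Acl_sq
  | true => powZModHom 3 Bcl Bcl_cube

noncomputable def ggHom : Monoid.CoprodI Hfam →* PSL := Monoid.CoprodI.lift fpp

def Xpp : Bool → Set ℍ := fun b => if b then {z : ℍ | 0 < z.re} else {z : ℍ | z.re < 0}

theorem ggHom_inj : Function.Injective ggHom := by
  classical
  apply Monoid.CoprodI.lift_injective_of_ping_pong fpp
      (Or.inr ⟨true, by
        rw [show Hfam true = Multiplicative (ZMod 3) from rfl]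
        simp [Cardinal.mk_fintype]⟩) Xpp
  · intro b
    cases b
    · refine ⟨⟨⟨-1, 1⟩, by norm_num⟩, ?_⟩
      show UpperHalfPlane.re _ < 0
      norm_num [UpperHalfPlane.re]
    · refine ⟨⟨⟨1, 1⟩, by norm_num⟩, ?_⟩
      show 0 < UpperHalfPlane.re _
      norm_num [UpperHalfPlane.re]
  · intro i j hij
    have : (i = false ∧ j = true) ∨ (i = true ∧ j = false) := by
      cases i <;> cases j <;> simp_all
    rcases this with ⟨rfl, rfl⟩ | ⟨rfl, rfl⟩ <;>
      · refine Set.disjoint_left.mpr ?_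
        intro z hz hz'
        simp [Xpp] at hz hz'
        linarith
  · intro i j hij
    have : (i = false ∧ j = true) ∨ (i = true ∧ j = false) := by
      cases i <;> cases j <;> simp_all
    rcases this with ⟨rfl, rfl⟩ | ⟨rfl, rfl⟩
    · show ∀ h : Multiplicative (ZMod 2), h ≠ 1 →
        powZModHom 2 Acl Acl_sq h • Xpp true ⊆ Xpp false
      intro h hh
      have h1 : h = Multiplicative.ofAdd (((1 : ℤ) : ZMod 2)) := by
        have hd : ∀ h' : Multiplicative (ZMod 2),
            h' ≠ 1 → h' = Multiplicative.ofAdd (((1 : ℤ) : ZMod 2)) := by decide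
        exact hd h hh
      subst h1
      rw [powZModHom_apply, zpow_one]
      intro w hw
      rw [Set.mem_smul_set] at hw
      obtain ⟨z, hz, rfl⟩ := hw
      simp only [Xpp, if_true, Set.mem_setOf_eq] at hz
      have := Amat_smul_re z hz
      exact this
    · show ∀ h : Multiplicative (ZMod 3), h ≠ 1 →
        powZModHom 3 Bcl Bcl_cube h • Xpp false ⊆ Xpp true
      intro h hh
      have h1 : h = Multiplicative.ofAdd (((1 : ℤ) : ZMod 3)) ∨
          h = Multiplicative.ofAdd (((2 : ℤ) : ZMod 3)) := by
        have hd : ∀ h' : Multiplicative (ZMod 3),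
            h' ≠ 1 → h' = Multiplicative.ofAdd (((1 : ℤ) : ZMod 3)) ∨
              h' = Multiplicative.ofAdd (((2 : ℤ) : ZMod 3)) := by decide
        exact hd h hh
      have hBsq : Bcl ^ (2 : ℤ) = QuotientGroup.mk' (Subgroup.center SL2Z) (Bmat ^ 2) := by
        rw [Bcl, ← map_zpow]
        rw [show (2 : ℤ) = ((2 : ℕ) : ℤ) from rfl, zpow_natCast]
      rcases h1 with rfl | rfl
      · rw [powZModHom_apply, zpow_one]
        intro w hw
        rw [Set.mem_smul_set] at hw
        obtain ⟨z, hz, rfl⟩ := hw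
        simp only [Xpp, if_false, Set.mem_setOf_eq] at hz
        have := Bmat_smul_re z hz
        exact this
      · rw [powZModHom_apply, hBsq]
        intro w hw
        rw [Set.mem_smul_set] at hw
        obtain ⟨z, hz, rfl⟩ := hw
        simp only [Xpp, if_false, Set.mem_setOf_eq] at hz
        have := Bmat_sq_smul_re z hz
        exact this

/-! ### Homomorphisms out of `B3` -/

lemma word_lemma {G : Type*} [Group G] (a b : G) (ha : a ^ 2 = 1) (hb : b ^ 3 = 1) :
    (b⁻¹ * a) * (a⁻¹ * b ^ 2) * (b⁻¹ * a) *
      ((a⁻¹ * b ^ 2) * (b⁻¹ * a) * (a⁻¹ * b ^ 2))⁻¹ = 1 := by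
  have key : (b⁻¹ * a) * (a⁻¹ * b ^ 2) * (b⁻¹ * a) *
      ((a⁻¹ * b ^ 2) * (b⁻¹ * a) * (a⁻¹ * b ^ 2))⁻¹ = a * (b ^ 3)⁻¹ * a := by
    group
  rw [key, hb, inv_one, mul_one, ← sq, ha]

lemma sigma12_cube : (sigma1 * sigma2) ^ 3 = delta ^ 2 := by
  calc (sigma1 * sigma2) ^ 3
      = (sigma1 * sigma2 * sigma1) * (sigma2 * sigma1 * sigma2) := by
        simp only [pow_succ, pow_zero, one_mul, mul_assoc]
    _ = (sigma1 * sigma2 * sigma1) * (sigma1 * sigma2 * sigma1) := by rw [← braid]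
    _ = delta ^ 2 := by rw [sq, delta]

section CoprodSide

def aC : Monoid.CoprodI Hfam :=
  Monoid.CoprodI.of (i := false) (show Hfam false from Multiplicative.ofAdd (((1 : ℤ) : ZMod 2)))

def bC : Monoid.CoprodI Hfam :=
  Monoid.CoprodI.of (i := true) (show Hfam true from Multiplicative.ofAdd (((1 : ℤ) : ZMod 3)))

lemma aC_sq : aC ^ 2 = 1 := by
  rw [aC, ← map_pow]
  have h : (Multiplicative.ofAdd (((1 : ℤ) : ZMod 2))) ^ 2 = 1 := by decide
  rw [show (show Hfam false from Multiplicative.ofAdd (((1 : ℤ) : ZMod 2))) ^ 2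
      = (show Hfam false from 1) from h ▸ rfl]
  exact map_one _

lemma bC_cube : bC ^ 3 = 1 := by
  rw [bC, ← map_pow]
  have h : (Multiplicative.ofAdd (((1 : ℤ) : ZMod 3))) ^ 3 = 1 := by decide
  rw [show (show Hfam true from Multiplicative.ofAdd (((1 : ℤ) : ZMod 3))) ^ 3
      = (show Hfam true from 1) from h ▸ rfl]
  exact map_one _

def fgen : Fin 2 → Monoid.CoprodI Hfam := ![bC⁻¹ * aC, aC⁻¹ * bC ^ 2]

lemma fgen_rels : ∀ r ∈ B3rels, FreeGroup.lift fgen r = 1 := by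
  intro r hr
  rcases hr with rfl
  simp only [_root_.map_mul, _root_.map_inv, FreeGroup.lift_apply_of]
  have h0 : fgen 0 = bC⁻¹ * aC := rfl
  have h1 : fgen 1 = aC⁻¹ * bC ^ 2 := rfl
  rw [h0, h1]
  exact word_lemma aC bC aC_sq bC_cube

def fhat : B3 →* Monoid.CoprodI Hfam := PresentedGroup.toGroup fgen_rels

lemma fhat_sigma1 : fhat sigma1 = bC⁻¹ * aC := by
  rw [sigma1, fhat]
  exact PresentedGroup.toGroup.of fgen_rels

lemma fhat_sigma2 : fhat sigma2 = aC⁻¹ * bC ^ 2 := by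
  rw [sigma2, fhat]
  exact PresentedGroup.toGroup.of fgen_rels

lemma ggHom_aC : ggHom aC = Acl := by
  rw [ggHom, aC, Monoid.CoprodI.lift_of]
  show powZModHom 2 Acl Acl_sq (Multiplicative.ofAdd (((1 : ℤ) : ZMod 2))) = Acl
  rw [powZModHom_apply, zpow_one]

lemma ggHom_bC : ggHom bC = Bcl := by
  rw [ggHom, bC, Monoid.CoprodI.lift_of]
  show powZModHom 3 Bcl Bcl_cube (Multiplicative.ofAdd (((1 : ℤ) : ZMod 3))) = Bcl
  rw [powZModHom_apply, zpow_one]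

end CoprodSide

/-! ### The quotient side -/

abbrev B3Q := B3 ⧸ Subgroup.normalClosure ({delta ^ 2} : Set B3)

def dQ : B3Q := QuotientGroup.mk' _ delta
def yQ : B3Q := QuotientGroup.mk' _ (sigma1 * sigma2)

lemma dQ_sq : dQ ^ (2 : ℤ) = 1 := by
  rw [dQ, ← _root_.map_zpow, QuotientGroup.mk'_apply, QuotientGroup.eq_one_iff]
  rw [show (2 : ℤ) = ((2 : ℕ) : ℤ) from rfl, zpow_natCast]
  exact Subgroup.subset_normalClosure rfl

lemma yQ_cube : yQ ^ (3 : ℤ) = 1 := by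
  rw [yQ, ← _root_.map_zpow, QuotientGroup.mk'_apply, QuotientGroup.eq_one_iff]
  rw [show (3 : ℤ) = ((3 : ℕ) : ℤ) from rfl, zpow_natCast, sigma12_cube]
  exact Subgroup.subset_normalClosure rfl

def hfam : ∀ b : Bool, Hfam b →* B3Q
  | false => powZModHom 2 dQ dQ_sq
  | true => powZModHom 3 yQ yQ_cube

noncomputable def hHom : Monoid.CoprodI Hfam →* B3Q := Monoid.CoprodI.lift hfam

lemma hHom_aC : hHom aC = dQ := by
  rw [hHom, aC, Monoid.CoprodI.lift_of]
  show powZModHom 2 dQ dQ_sq (Multiplicative.ofAdd (((1 : ℤ) : ZMod 2))) = dQ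
  rw [powZModHom_apply, zpow_one]

lemma hHom_bC : hHom bC = yQ := by
  rw [hHom, bC, Monoid.CoprodI.lift_of]
  show powZModHom 3 yQ yQ_cube (Multiplicative.ofAdd (((1 : ℤ) : ZMod 3))) = yQ
  rw [powZModHom_apply, zpow_one]

lemma hHom_fhat :
    hHom.comp fhat = QuotientGroup.mk' (Subgroup.normalClosure ({delta ^ 2} : Set B3)) := by
  apply PresentedGroup.ext
  intro x
  fin_cases x
  · show hHom (fhat sigma1) = QuotientGroup.mk' _ sigma1
    rw [fhat_sigma1, _root_.map_mul, _root_.map_inv, hHom_aC, hHom_bC, dQ, yQ, ← _root_.map_inv, ← _root_.map_mul]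
    refine congrArg _ ?_
    rw [delta]
    group
  · show hHom (fhat sigma2) = QuotientGroup.mk' _ sigma2
    rw [fhat_sigma2, _root_.map_mul, _root_.map_inv, _root_.map_pow, hHom_aC, hHom_bC, dQ, yQ,
      ← _root_.map_inv, ← _root_.map_pow, ← _root_.map_mul]
    refine congrArg _ ?_
    rw [delta]
    have : (sigma1 * sigma2) ^ 2 = sigma1 * sigma2 * (sigma1 * sigma2) := sq _
    rw [this]
    group

lemma pi_eq (τ : B3 →* SL2Z) (hτ1 : τ sigma1 = Smat) (hτ2 : τ sigma2 = Tmat) :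
    (QuotientGroup.mk' (Subgroup.center SL2Z)).comp τ = ggHom.comp fhat := by
  apply PresentedGroup.ext
  intro x
  fin_cases x
  · show QuotientGroup.mk' _ (τ sigma1) = ggHom (fhat sigma1)
    rw [hτ1, fhat_sigma1, _root_.map_mul, _root_.map_inv, ggHom_aC, ggHom_bC, Acl, Bcl, ← _root_.map_inv, ← _root_.map_mul]
    refine congrArg _ ?_
    rw [Amat, Bmat]
    group
  · show QuotientGroup.mk' _ (τ sigma2) = ggHom (fhat sigma2)
    rw [hτ2, fhat_sigma2, _root_.map_mul, _root_.map_inv, _root_.map_pow, ggHom_aC, ggHom_bC, Acl, Bcl,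
      ← _root_.map_inv, ← _root_.map_pow, ← _root_.map_mul]
    refine congrArg _ ?_
    rw [Amat, Bmat]
    have : (Smat * Tmat) ^ 2 = Smat * Tmat * (Smat * Tmat) := sq _
    rw [this]
    group

lemma pi_surj (τ : B3 →* SL2Z) (hτ1 : τ sigma1 = Smat) (hτ2 : τ sigma2 = Tmat) :
    Function.Surjective ((QuotientGroup.mk' (Subgroup.center SL2Z)).comp τ) := by
  intro u
  obtain ⟨g, rfl⟩ := QuotientGroup.mk'_surjective _ u
  refine Subgroup.closure_induction
    (p := fun x _ => ∃ b : B3,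
      ((QuotientGroup.mk' (Subgroup.center SL2Z)).comp τ) b = QuotientGroup.mk' _ x)
    ?_ ?_ ?_ ?_ (mem_Hgen g)
  · intro x hx
    rcases hx with rfl | rfl
    · exact ⟨sigma1, by simp [hτ1]⟩
    · exact ⟨sigma2, by simp [hτ2]⟩
  · exact ⟨1, by simp⟩
  · rintro x y _ _ ⟨bx, hbx⟩ ⟨by', hby⟩
    exact ⟨bx * by', by rw [_root_.map_mul, _root_.map_mul, hbx, hby]⟩
  · rintro x _ ⟨bx, hbx⟩
    exact ⟨bx⁻¹, by rw [_root_.map_inv, _root_.map_inv, hbx]⟩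

lemma key_lemma (τ : B3 →* SL2Z) (hτ1 : τ sigma1 = Smat) (hτ2 : τ sigma2 = Tmat)
    (e : B3 →* Multiplicative ℤ)
    (he1 : e sigma1 = Multiplicative.ofAdd 1) (he2 : e sigma2 = Multiplicative.ofAdd 1)
    (x : B3) (hker : (QuotientGroup.mk' (Subgroup.center SL2Z)) (τ x) = 1)
    (hex : e x = 1) : x = 1 := by
  have h1 : ggHom (fhat x) = 1 := by
    have hpe := pi_eq τ hτ1 hτ2
    have : ((QuotientGroup.mk' (Subgroup.center SL2Z)).comp τ) x = 1 := hker
    rwa [hpe, MonoidHom.comp_apply] at this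
  have h2 : fhat x = 1 := ggHom_inj (by rw [h1, _root_.map_one])
  have h3 : QuotientGroup.mk' (Subgroup.normalClosure ({delta ^ 2} : Set B3)) x = 1 := by
    rw [← hHom_fhat, MonoidHom.comp_apply, h2, _root_.map_one]
  have h4 : x ∈ Subgroup.normalClosure ({delta ^ 2} : Set B3) :=
    (QuotientGroup.eq_one_iff x).mp h3
  rw [normalClosure_deltasq] at h4
  obtain ⟨k, hk⟩ := Subgroup.mem_zpowers_iff.mp h4
  have hedelta : e (delta ^ 2) = Multiplicative.ofAdd (6 : ℤ) := by
    have hd : e delta = Multiplicative.ofAdd (3 : ℤ) := by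
      rw [delta, _root_.map_mul, _root_.map_mul, he1, he2, ← ofAdd_add, ← ofAdd_add]
      norm_num
    rw [_root_.map_pow, hd, sq, ← ofAdd_add]
    norm_num
  have hex2 : e x = Multiplicative.ofAdd (k * 6) := by
    rw [← hk, _root_.map_zpow, hedelta, ← ofAdd_zsmul, smul_eq_mul]
  rw [hex2] at hex
  have hk0 : k * 6 = 0 := by
    have := Multiplicative.ofAdd.injective (hex.trans (ofAdd_zero).symm)
    exact this
  have : k = 0 := by omega
  rw [this] at hk
  simpa using hk.symm

/-- Two 3-braids `φ, ψ ∈ B₃` are conjugate in `B₃` iff they have the same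
exponent sum and their images under the surjection `B₃ → PSL(2,ℤ)` are
conjugate in `PSL(2,ℤ)`. -/
theorem conj_iff_expSum_and_PSL_conj
    (τ : B3 →* Matrix.SpecialLinearGroup (Fin 2) ℤ)
    (hτ1 : τ sigma1 = Smat) (hτ2 : τ sigma2 = Tmat)
    (e : B3 →* Multiplicative ℤ)
    (he1 : e sigma1 = Multiplicative.ofAdd 1) (he2 : e sigma2 = Multiplicative.ofAdd 1)
    (φ ψ : B3) :
    IsConj φ ψ ↔
      e φ = e ψ ∧
      IsConj
        ((QuotientGroup.mk' (Subgroup.center (Matrix.SpecialLinearGroup (Fin 2) ℤ))) (τ φ))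
        ((QuotientGroup.mk' (Subgroup.center (Matrix.SpecialLinearGroup (Fin 2) ℤ))) (τ ψ)) := by
  constructor
  · intro h
    constructor
    · obtain ⟨c, hc⟩ := isConj_iff.mp h
      rw [← hc, _root_.map_mul, _root_.map_mul, _root_.map_inv,
        mul_comm (e c) (e φ), mul_inv_cancel_right]
    · exact ((QuotientGroup.mk' (Subgroup.center SL2Z)).comp τ).map_isConj h
  · rintro ⟨hee, hconj⟩
    obtain ⟨u, hu⟩ := isConj_iff.mp hconj
    obtain ⟨c, hc⟩ := pi_surj τ hτ1 hτ2 u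
    have hc' : QuotientGroup.mk' (Subgroup.center SL2Z) (τ c) = u := hc
    have hker : (QuotientGroup.mk' (Subgroup.center SL2Z)) (τ (c * φ * c⁻¹ * ψ⁻¹)) = 1 := by
      simp only [_root_.map_mul, _root_.map_inv]
      rw [hc', hu]
      simp
    have hexx : e (c * φ * c⁻¹ * ψ⁻¹) = 1 := by
      simp only [_root_.map_mul, _root_.map_inv, hee]
      rw [mul_comm (e c) (e ψ), mul_inv_cancel_right]
      simp
    have h1 : c * φ * c⁻¹ * ψ⁻¹ = 1 := key_lemma τ hτ1 hτ2 e he1 he2 _ hker hexx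
    exact isConj_iff.mpr ⟨c, mul_inv_eq_one.mp h1⟩
end

section
/- Let C1, ..., Cm be a sequence of nonzero integers each with absolute value at most 3, such that whenever Ck and Ck+1 have different signs (1 < k < m), either Ck-1 and Ck have different signs or Ck+1 and Ck+2 have different signs, and such that every maximal sign-change (turning point) subsequence is of the form (±3, ∓2, ±1) or (±1, ∓2, ±3). Define partial sums k_i = C1 + ... + C_{i}. Then there exists an index i such that k_i ≠ k_j for all j ≠ i. -/
namespace MoodyCore

private lemma neg_of_mul' {a b : ℤ} (h : a * b < 0) (ha : 0 < a) : b < 0 := by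
  by_contra hb; push_neg at hb; nlinarith

def S (C : ℕ → ℤ) (j : ℕ) : ℤ := ∑ l ∈ Finset.Icc 1 j, C l

lemma S_succ (C : ℕ → ℤ) (a b : ℕ) (h : b = a + 1) : S C b = S C a + C b := by
  subst h
  exact Finset.sum_Icc_succ_top (Nat.succ_le_succ (Nat.zero_le a)) C

theorem aux (m : ℕ) (hm : 1 ≤ m) (C : ℕ → ℤ)
    (hCm : 0 < C m)
    (hnz : ∀ i, 1 ≤ i → i ≤ m → C i ≠ 0)
    (hbd : ∀ i, 1 ≤ i → i ≤ m → |C i| ≤ 3)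
    (hadj : ∀ k, 2 ≤ k → k + 1 ≤ m → C k * C (k + 1) < 0 →
      (C (k - 1) * C k < 0 ∨ (k + 2 ≤ m ∧ C (k + 1) * C (k + 2) < 0)))
    (hturn : ∀ k, 1 ≤ k → k + 2 ≤ m →
      C k * C (k + 1) < 0 → C (k + 1) * C (k + 2) < 0 →
      ((|C k| = 3 ∧ |C (k + 1)| = 2 ∧ |C (k + 2)| = 1) ∨
       (|C k| = 1 ∧ |C (k + 1)| = 2 ∧ |C (k + 2)| = 3))) :
    ∃ i, 1 ≤ i ∧ i ≤ m ∧ ∀ j, 1 ≤ j → j ≤ m → j ≠ i → S C j ≠ S C i := by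
  have sgn : ∀ i, 1 ≤ i → i ≤ m → C i < 0 ∨ 0 < C i := by
    intro i h1 h2
    rcases lt_trichotomy (C i) 0 with h|h|h
    · exact Or.inl h
    · exact absurd h (hnz i h1 h2)
    · exact Or.inr h
  have hbd' : ∀ i, 1 ≤ i → i ≤ m → -3 ≤ C i ∧ C i ≤ 3 := fun i h1 h2 => abs_le.mp (hbd i h1 h2)
  have hadj' : ∀ k0 k k1 k2, k = k0 + 1 → k1 = k + 1 → k2 = k + 2 → 2 ≤ k → k1 ≤ m →
      C k * C k1 < 0 → (C k0 * C k < 0 ∨ (k2 ≤ m ∧ C k1 * C k2 < 0)) := by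
    intro k0 k k1 k2 e0 e1 e2 h1 h2 h3
    subst e0; subst e1; subst e2
    simpa using hadj (k0+1) h1 h2 h3
  have hturn' : ∀ k k1 k2, k1 = k + 1 → k2 = k + 2 → 1 ≤ k → k2 ≤ m →
      C k * C k1 < 0 → C k1 * C k2 < 0 →
      ((|C k| = 3 ∧ |C k1| = 2 ∧ |C k2| = 1) ∨
       (|C k| = 1 ∧ |C k1| = 2 ∧ |C k2| = 3)) := by
    intro k k1 k2 e1 e2 h1 h2 h3 h4
    subst e1; subst e2
    exact hturn k h1 h2 h3 h4
  -- no two consecutive negatives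
  have R0 : ∀ d i, m ≤ i + d → 1 ≤ i → i + 1 ≤ m → C i < 0 → 0 < C (i+1) := by
    intro d
    induction d with
    | zero => intro i hd h1 h2 _; omega
    | succ d ih =>
      intro i hd h1 h2 hneg
      rcases sgn (i+1) (by omega) h2 with h | h
      swap
      · exact h
      exfalso
      have h2' : i + 2 ≤ m := by
        by_contra hc
        have he : i + 1 = m := by omega
        rw [he] at h; linarith
      have hpos2 : 0 < C (i+2) := by
        have h' := ih (i+1) (by omega) (by omega) (by omega) h
        have e : i+1+1 = i+2 := by omega
        rwa [e] at h'
      have hch1 : C (i+1) * C (i+2) < 0 := mul_neg_of_neg_of_pos h hpos2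
      rcases hadj' i (i+1) (i+2) (i+3) rfl (by omega) (by omega) (by omega) h2' hch1 with hl | ⟨h3m, hch2⟩
      · have := mul_pos_of_neg_of_neg hneg h
        linarith
      · have hneg3 : C (i+3) < 0 := neg_of_mul' hch2 hpos2
        have h4m : i + 4 ≤ m := by
          by_contra hc
          have he : i + 3 = m := by omega
          rw [he] at hneg3; linarith
        have hpos4 : 0 < C (i+4) := by
          have h' := ih (i+3) (by omega) (by omega) (by omega) hneg3
          have e : i+3+1 = i+4 := by omega
          rwa [e] at h'
        have ht1 := hturn' (i+1) (i+2) (i+3) (by omega) (by omega) (by omega) h3m hch1 hch2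
        have ht2 := hturn' (i+2) (i+3) (i+4) (by omega) (by omega) (by omega) h4m hch2
          (mul_neg_of_neg_of_pos hneg3 hpos4)
        rcases ht1 with ⟨_, e2, _⟩ | ⟨_, e2, _⟩ <;>
          rcases ht2 with ⟨e3, _, _⟩ | ⟨e3, _, _⟩ <;>
          (rw [e2] at e3; norm_num at e3)
  -- shape of negatives
  have S2 : ∀ k k1 k2, k1 = k + 1 → k2 = k + 2 → 1 ≤ k → k1 ≤ m → C k1 < 0 →
      k2 ≤ m ∧ ((C k = 3 ∧ C k1 = -2 ∧ C k2 = 1) ∨ (C k = 1 ∧ C k1 = -2 ∧ C k2 = 3)) := by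
    intro k k1 k2 e1 e2 hk hk1m hneg
    subst e1; subst e2
    have hk2m : k + 2 ≤ m := by
      by_contra hc
      have he : k + 1 = m := by omega
      rw [he] at hneg; linarith
    have hp2 : 0 < C (k+2) := by
      have h' := R0 m (k+1) (by omega) (by omega) hk2m hneg
      have e : k+1+1 = k+2 := by omega
      rwa [e] at h'
    have hp0 : 0 < C k := by
      rcases sgn k hk (by omega) with h | h
      · exfalso
        have := R0 m k (by omega) hk (by omega) h
        linarith
      · exact h
    have hch1 : C k * C (k+1) < 0 := mul_neg_of_pos_of_neg hp0 hneg
    have hch2 : C (k+1) * C (k+2) < 0 := mul_neg_of_neg_of_pos hneg hp2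
    refine ⟨hk2m, ?_⟩
    have e1 : |C k| = C k := abs_of_pos hp0
    have e2 : |C (k+1)| = -C (k+1) := abs_of_neg hneg
    have e3 : |C (k+2)| = C (k+2) := abs_of_pos hp2
    rcases hturn' k (k+1) (k+2) rfl rfl hk hk2m hch1 hch2 with ⟨h3, h2, h1⟩ | ⟨h3, h2, h1⟩
    · left; rw [e1] at h3; rw [e2] at h2; rw [e3] at h1
      exact ⟨h3, by linarith, h1⟩
    · right; rw [e1] at h3; rw [e2] at h2; rw [e3] at h1
      exact ⟨h3, by linarith, h1⟩
  -- negatives are at distance ≥ 3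
  have S3 : ∀ i i1 i2, i1 = i + 1 → i2 = i + 2 → 1 ≤ i → i2 ≤ m → C i < 0 → C i2 < 0 → False := by
    intro i i1 i2 e1 e2 h1 h2 hni hni2
    subst e1; subst e2
    have hp : 0 < C (i+1) := R0 m i (by omega) h1 (by omega) hni
    have hch1 : C i * C (i+1) < 0 := mul_neg_of_neg_of_pos hni hp
    have hch2 : C (i+1) * C (i+2) < 0 := mul_neg_of_pos_of_neg hp hni2
    obtain ⟨_, hv⟩ := S2 (i+1) (i+2) (i+3) (by omega) (by omega) (by omega) h2 hni2
    have hval : C (i+2) = -2 := by rcases hv with ⟨_, h, _⟩ | ⟨_, h, _⟩ <;> exact h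
    rcases hturn' i (i+1) (i+2) rfl rfl h1 h2 hch1 hch2 with ⟨_, _, h⟩ | ⟨_, _, h⟩ <;>
      (rw [hval] at h; norm_num at h)
  -- the two-sided growth estimate
  have AB : ∀ D j i, j ≤ D → 1 ≤ i → i < j → j ≤ m →
      S C i - 2 ≤ S C j ∧ (0 < C j → S C i - 1 ≤ S C j) := by
    intro D
    induction D with
    | zero => intro j i hD h1 h2 h3; exact absurd h2 (by omega)
    | succ D ih =>
      intro j i hjD h1i hij hjm
      obtain ⟨t, rfl⟩ : ∃ t, j = t + 1 := ⟨j - 1, by omega⟩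
      have E1 : S C (t+1) = S C t + C (t+1) := S_succ C t (t+1) rfl
      rcases sgn (t+1) (by omega) hjm with hneg | hpos
      · obtain ⟨hk2m, hv⟩ := S2 t (t+1) (t+2) rfl rfl (by omega) hjm hneg
        have hCt : 1 ≤ C t := by rcases hv with ⟨h, _, _⟩ | ⟨h, _, _⟩ <;> omega
        have hCt1 : C (t+1) = -2 := by rcases hv with ⟨_, h, _⟩ | ⟨_, h, _⟩ <;> exact h
        refine ⟨?_, fun hc => absurd hc (not_lt.2 hneg.le)⟩
        rcases Nat.lt_or_ge i t with hit | hit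
        · obtain ⟨v, rfl⟩ : ∃ v, t = v + 1 := ⟨t - 1, by omega⟩
          have E2 : S C (v+1) = S C v + C (v+1) := S_succ C v (v+1) rfl
          rcases Nat.lt_or_ge i v with hiv | hiv
          · have hCv : 0 < C v := by
              rcases sgn v (by omega) (by omega) with h | h
              · exact (S3 v (v+1) (v+1+1) rfl (by omega) (by omega) (by omega) h hneg).elim
              · exact h
            have h2' := (ih v i (by omega) h1i hiv (by omega)).2 hCv
            linarith
          · obtain rfl : i = v := by omega
            linarith
        · obtain rfl : i = t := by omega
          linarith
      · have hCp : 1 ≤ C (t+1) := hpos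
        rcases Nat.lt_or_ge i t with hit | hit
        · rcases sgn t (by omega) (by omega) with hnegt | hpost
          · obtain ⟨v, rfl⟩ : ∃ v, t = v + 1 := ⟨t - 1, by omega⟩
            obtain ⟨hk2m', hv⟩ := S2 v (v+1) (v+1+1) rfl (by omega) (by omega) (by omega) hnegt
            have E2 : S C (v+1) = S C v + C (v+1) := S_succ C v (v+1) rfl
            have hsum : C v + C (v+1) + C (v+1+1) = 2 := by
              rcases hv with ⟨a, b, c⟩ | ⟨a, b, c⟩ <;> omega
            rcases Nat.lt_or_ge i v with hiv | hiv
            · obtain ⟨w, rfl⟩ : ∃ w, v = w + 1 := ⟨v - 1, by omega⟩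
              have E3 : S C (w+1) = S C w + C (w+1) := S_succ C w (w+1) rfl
              rcases Nat.lt_or_ge i w with hiw | hiw
              · have h1' := (ih w i (by omega) h1i hiw (by omega)).1
                exact ⟨by linarith, fun _ => by linarith⟩
              · obtain rfl : i = w := by omega
                exact ⟨by linarith, fun _ => by linarith⟩
            · have hCb : C (v+1) = -2 := by rcases hv with ⟨_, b, _⟩ | ⟨_, b, _⟩ <;> exact b
              have hCc : 1 ≤ C (v+1+1) := by rcases hv with ⟨_, _, c⟩ | ⟨_, _, c⟩ <;> omega
              obtain rfl : i = v := by omega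
              exact ⟨by linarith, fun _ => by linarith⟩
          · have h2' := (ih t i (by omega) h1i hit (by omega)).2 hpost
            exact ⟨by linarith, fun _ => by linarith⟩
        · obtain rfl : i = t := by omega
          exact ⟨by linarith, fun _ => by linarith⟩
  -- choose the maximum
  obtain ⟨i0, hi0mem, hi0max⟩ :
      ∃ b ∈ Finset.Icc 1 m, ∀ a ∈ Finset.Icc 1 m, S C a ≤ S C b :=
    Finset.exists_max_image (Finset.Icc 1 m) (S C) ⟨1, by simp [hm]⟩
  obtain ⟨hi01, hi0m⟩ := Finset.mem_Icc.mp hi0mem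
  set M := S C i0 with hM
  have hmax : ∀ j, 1 ≤ j → j ≤ m → S C j ≤ M := fun j h1 h2 =>
    hi0max j (Finset.mem_Icc.mpr ⟨h1, h2⟩)
  -- Peak structure at an interior maximizer
  have Peak : ∀ j j1 j2, j1 = j + 1 → j2 = j + 2 → 1 ≤ j → j1 ≤ m → S C j = M →
      C j = 3 ∧ C j1 = -2 ∧ C j2 = 1 ∧ j2 ≤ m ∧ S C j1 = M - 2 ∧ S C j2 = M - 1 := by
    intro j j1 j2 e1 e2 h1 h2 hSj
    subst e1; subst e2
    have E1 : S C (j+1) = S C j + C (j+1) := S_succ C j (j+1) rfl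
    have hneg : C (j+1) < 0 := by
      rcases sgn (j+1) (by omega) h2 with h | h
      · exact h
      · exfalso; have := hmax (j+1) (by omega) h2; linarith
    obtain ⟨hk2m, hv⟩ := S2 j (j+1) (j+2) rfl rfl h1 h2 hneg
    have E2 : S C (j+2) = S C (j+1) + C (j+2) := S_succ C (j+1) (j+2) (by omega)
    rcases hv with ⟨ha, hb, hc⟩ | ⟨ha, hb, hc⟩
    · exact ⟨ha, hb, hc, hk2m, by linarith, by linarith⟩
    · exfalso
      have := hmax (j+2) (by omega) hk2m
      linarith
  -- no two maximizers both < m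
  have NoTwo : ∀ a b, 1 ≤ a → a < b → b + 1 ≤ m → S C a = M → S C b = M → False := by
    intro a b h1a hab hbm hSa hSb
    obtain ⟨Pa3, Pa2, Pa1, ham, hSa1, hSa2⟩ := Peak a (a+1) (a+2) rfl rfl h1a (by omega) hSa
    obtain ⟨w, rfl⟩ : ∃ w, b = w + 1 := ⟨b - 1, by omega⟩
    obtain ⟨Pb3, Pb2, Pb1, hbm2, hSb1, hSb2⟩ :=
      Peak (w+1) (w+2) (w+3) (by omega) (by omega) (by omega) (by omega) hSb
    rcases Nat.lt_or_ge w (a+2) with hw | hw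
    · have hcase : w = a ∨ w = a + 1 := by omega
      rcases hcase with rfl | rfl
      · rw [Pa2] at Pb3; norm_num at Pb3
      · have e : a+1+1 = a+2 := by omega
        rw [e] at Pb3
        rw [Pa1] at Pb3; norm_num at Pb3
    · have hCw : 0 < C w := by
        rcases sgn w (by omega) (by omega) with h | h
        · exact (S3 w (w+1) (w+2) rfl rfl (by omega) (by omega) h (by omega)).elim
        · exact h
      obtain ⟨x, rfl⟩ : ∃ x, w = x + 1 := ⟨w - 1, by omega⟩
      have E1 : S C (x+1) = S C x + C (x+1) := S_succ C x (x+1) rfl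
      have E2 : S C (x+1+1) = S C (x+1) + C (x+1+1) := S_succ C (x+1) (x+1+1) rfl
      have hPb3' : C (x+1+1) = 3 := Pb3
      have hSb' : S C (x+1+1) = M := hSb
      have hCw1 : 1 ≤ C (x+1) := hCw
      have hax : a < x := by omega
      have h1' := (AB m x a (by omega) h1a hax (by omega)).1
      linarith
  by_cases hun : ∀ j, 1 ≤ j → j ≤ m → S C j = M → j = i0
  · exact ⟨i0, hi01, hi0m, fun j hj1 hj2 hjne hSeq => hjne (hun j hj1 hj2 hSeq)⟩
  · push_neg at hun
    obtain ⟨j1, hj11, hj12, hj1M, hj1ne⟩ := hun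
    have key : ∀ a b, 1 ≤ a → a < b → b ≤ m → S C a = M → S C b = M →
        ∃ i, 1 ≤ i ∧ i ≤ m ∧ ∀ j, 1 ≤ j → j ≤ m → j ≠ i → S C j ≠ S C i := by
      intro a b h1a hab hbm hSa hSb
      have hbm' : b = m := by
        by_contra hc
        exact NoTwo a b h1a hab (by omega) hSa hSb
      rw [hbm'] at hSb
      obtain ⟨Pa3, Pa2, Pa1, ham, hSa1, hSa2⟩ := Peak a (a+1) (a+2) rfl rfl h1a (by omega) hSa
      have ham3 : a + 3 ≤ m := by
        by_contra hc
        have he : a + 2 = m := by omega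
        rw [he] at hSa2
        omega
      have hpos3 : 0 < C (a+3) := by
        rcases sgn (a+3) (by omega) ham3 with h | h
        · exact (S3 (a+1) (a+2) (a+3) (by omega) (by omega) (by omega) ham3 (by omega) h).elim
        · exact h
      have E3 : S C (a+3) = S C (a+2) + C (a+3) := S_succ C (a+2) (a+3) (by omega)
      have hle3 := hmax (a+3) (by omega) ham3
      have hC3 : C (a+3) = 1 ∧ S C (a+3) = M := by omega
      have hm3 : a + 3 = m := by
        by_contra hc
        exact NoTwo a (a+3) h1a (by omega) (by omega) hSa hC3.2
      -- no early occurrence of M - 1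
      have NE : ∀ D q, a ≤ q + D → 1 ≤ q → q < a → S C q ≠ M - 1 := by
        intro D
        induction D with
        | zero => intro q h h1 h2; omega
        | succ D ih =>
          intro q hD h1q hqa hSq
          have hqm : q + 1 ≤ m := by omega
          have E1 : S C (q+1) = S C q + C (q+1) := S_succ C q (q+1) rfl
          by_cases hq1a : q + 1 = a
          · have E : S C a = S C q + C a := S_succ C q a (by omega)
            omega
          rcases sgn (q+1) (by omega) hqm with hneg | hpos
          · obtain ⟨hq2m, hv⟩ := S2 q (q+1) (q+2) rfl rfl h1q hqm hneg
            have E2 : S C (q+2) = S C (q+1) + C (q+2) := S_succ C (q+1) (q+2) (by omega)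
            rcases hv with ⟨ha', hb', hc'⟩ | ⟨ha', hb', hc'⟩
            · -- shape (3, -2, 1)
              have hSq2 : S C (q+2) = M - 2 := by omega
              have hq3m : q + 3 ≤ m := by omega
              have hpos3' : 0 < C (q+3) := by
                rcases sgn (q+3) (by omega) hq3m with h | h
                · exact (S3 (q+1) (q+2) (q+3) (by omega) (by omega) (by omega) hq3m
                      (by omega) h).elim
                · exact h
              have E3' : S C (q+3) = S C (q+2) + C (q+3) := S_succ C (q+2) (q+3) (by omega)
              have hle := hmax (q+3) (by omega) hq3m
              have hb3 := hbd' (q+3) (by omega) hq3m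
              have hcase : C (q+3) = 1 ∨ C (q+3) = 2 := by omega
              rcases hcase with h1' | h2'
              · have hS3 : S C (q+3) = M - 1 := by omega
                have hcase2 : q + 3 < a ∨ q + 3 = a ∨ q + 3 = a + 1 := by omega
                rcases hcase2 with h | h | h
                · exact ih (q+3) (by omega) (by omega) h hS3
                · rw [h] at hS3; omega
                · rw [h] at hS3; omega
              · have hS3 : S C (q+3) = M := by omega
                have hcase2 : q + 3 < a ∨ q + 3 = a ∨ q + 3 = a + 1 := by omega
                rcases hcase2 with h | h | h
                · exact NoTwo (q+3) a (by omega) h (by omega) hS3 hSa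
                · rw [h] at h2'; omega
                · rw [h] at hS3; omega
            · -- shape (1, -2, 3)
              have hSq2 : S C (q+2) = M := by omega
              have hcase : q + 2 < a ∨ q + 2 = a := by omega
              rcases hcase with h | h
              · exact NoTwo (q+2) a (by omega) h (by omega) hSq2 hSa
              · have e : a + 1 = q + 3 := by omega
                rw [e] at Pa2
                exact S3 (q+1) (q+2) (q+3) (by omega) (by omega) (by omega) (by omega)
                  (by omega) (by omega)
          · have hle := hmax (q+1) (by omega) hqm
            have hC1 : S C (q+1) = M := by omega
            have h : q + 1 < a := by omega
            exact NoTwo (q+1) a (by omega) h (by omega) hC1 hSa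
      refine ⟨a + 2, by omega, by omega, ?_⟩
      intro j hj1 hj2 hjne
      rw [hSa2]
      have hcase : j < a ∨ j = a ∨ j = a + 1 ∨ j = a + 3 := by omega
      rcases hcase with h | h | h | h
      · exact NE a j (by omega) hj1 h
      · rw [h]; omega
      · rw [h]; omega
      · rw [h]
        have := hC3.2
        omega
    rcases Nat.lt_or_ge j1 i0 with h | h
    · exact key j1 i0 hj11 h hi0m hj1M hM.symm
    · have h' : i0 < j1 := by omega
      exact key i0 j1 hi01 h' hj12 hM.symm hj1M

end MoodyCore

/-- The combinatorial core of the proof that the Moody polynomial of a 3-braid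
has a coefficient `±1`.  Let `C 1, …, C m` be a sequence of nonzero integers of
absolute value at most `3` such that any sign change is adjacent to another
sign change, and every turning point (two consecutive sign changes) is of the
form `(±3, ∓2, ±1)` or `(±1, ∓2, ±3)`.  Then some partial sum
`k_i = C 1 + ⋯ + C i` is attained at no other index. -/
theorem exists_unique_partial_sum
    (m : ℕ) (hm : 1 ≤ m) (C : ℕ → ℤ)
    (hnz : ∀ i, 1 ≤ i → i ≤ m → C i ≠ 0)
    (hbd : ∀ i, 1 ≤ i → i ≤ m → |C i| ≤ 3)
    (hadj : ∀ k, 2 ≤ k → k + 1 ≤ m → C k * C (k + 1) < 0 →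
      (C (k - 1) * C k < 0 ∨ (k + 2 ≤ m ∧ C (k + 1) * C (k + 2) < 0)))
    (hturn : ∀ k, 1 ≤ k → k + 2 ≤ m →
      C k * C (k + 1) < 0 → C (k + 1) * C (k + 2) < 0 →
      ((|C k| = 3 ∧ |C (k + 1)| = 2 ∧ |C (k + 2)| = 1) ∨
       (|C k| = 1 ∧ |C (k + 1)| = 2 ∧ |C (k + 2)| = 3))) :
    ∃ i, 1 ≤ i ∧ i ≤ m ∧ ∀ j, 1 ≤ j → j ≤ m → j ≠ i →
      (∑ l ∈ Finset.Icc 1 j, C l) ≠ (∑ l ∈ Finset.Icc 1 i, C l) := by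
  have hCm := hnz m hm le_rfl
  rcases lt_trichotomy (C m) 0 with h | h | h
  · obtain ⟨i, h1, h2, h3⟩ := MoodyCore.aux m hm (fun n => -C n) (by simpa using h)
      (fun i hi1 hi2 => by simpa using hnz i hi1 hi2)
      (fun i hi1 hi2 => by simpa using hbd i hi1 hi2)
      (fun k hk1 hk2 hc => by
        have hc' : C k * C (k+1) < 0 := by
          have : -C k * -C (k+1) < 0 := hc
          rwa [neg_mul_neg] at this
        rcases hadj k hk1 hk2 hc' with h' | ⟨h1', h2'⟩
        · left; show -C (k-1) * -C k < 0; rwa [neg_mul_neg]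
        · right; refine ⟨h1', ?_⟩; show -C (k+1) * -C (k+2) < 0; rwa [neg_mul_neg])
      (fun k hk1 hk2 hc1 hc2 => by
        have hc1' : C k * C (k+1) < 0 := by
          have : -C k * -C (k+1) < 0 := hc1
          rwa [neg_mul_neg] at this
        have hc2' : C (k+1) * C (k+2) < 0 := by
          have : -C (k+1) * -C (k+2) < 0 := hc2
          rwa [neg_mul_neg] at this
        simpa [abs_neg] using hturn k hk1 hk2 hc1' hc2')
    refine ⟨i, h1, h2, fun j hj1 hj2 hjne hEq => h3 j hj1 hj2 hjne ?_⟩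
    simp only [MoodyCore.S, Finset.sum_neg_distrib]
    rw [hEq]
  · exact absurd h hCm
  · obtain ⟨i, h1, h2, h3⟩ := MoodyCore.aux m hm C h hnz hbd hadj hturn
    exact ⟨i, h1, h2, fun j hj1 hj2 hjne => by
      simpa [MoodyCore.S] using h3 j hj1 hj2 hjne⟩
end
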